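/- (Lemma 2.5, third inequality.) For all integers j, k ≥ 1 there exists c = c(k,j) > 0 such that for every Schwartz function f : ℝ → ℂ, ‖⟨x⟩^k ∂_x^j f‖₂² ≤ c ‖⟨x⟩^{k+1} ∂_x^{j+1} f‖₂ · ‖⟨x⟩^{k-1} ∂_x^{j-1} f‖₂ + c ‖⟨x⟩^{k-1} ∂_x^{j-1} f‖₂². -/

import Mathlib

/-!
Put `u = ∂_x^{j-1} f` and `w = (1 + x²)^k`. Integrating by parts,
`∫ w ‖u'‖² = -∫ w' ⟪u', u⟫ - ∫ w ⟪u'', u⟫`, and `|w'| = 2k|x|(1 + x²)^{k-1} ≤ 2k ⟨x⟩^k ⟨x⟩^{k-1}`,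
so Cauchy–Schwarz gives `A² ≤ 2k A B + C B` for the weighted norms
`A = ‖⟨x⟩^k u'‖₂`, `B = ‖⟨x⟩^{k-1} u‖₂`, `C = ‖⟨x⟩^{k+1} u''‖₂`.
Young's inequality `2k A B ≤ A²/2 + 2k² B²` absorbs the first term.
-/

open MeasureTheory SchwartzMap

theorem integral_norm_mul_norm_le_sqrt_mul_sqrt {α F : Type*} [MeasurableSpace α] {μ : Measure α}
    [NormedAddCommGroup F] {f g : α → F} (hf : MemLp f 2 μ) (hg : MemLp g 2 μ) :
    ∫ a, ‖f a‖ * ‖g a‖ ∂μ ≤ √(∫ a, ‖f a‖ ^ 2 ∂μ) * √(∫ a, ‖g a‖ ^ 2 ∂μ) := by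
  have h := integral_mul_norm_le_Lp_mul_Lq Real.HolderConjugate.two_two
    (by rwa [ENNReal.ofReal_ofNat] : MemLp f _ μ) (by rwa [ENNReal.ofReal_ofNat] : MemLp g _ μ)
  rw [Real.sqrt_eq_rpow, Real.sqrt_eq_rpow]
  simpa only [one_div, Real.rpow_two] using h

theorem one_le_sqrt_one_add_sq (x : ℝ) : 1 ≤ √(1 + x ^ 2) :=
  Real.one_le_sqrt.2 (by nlinarith)

theorem abs_le_sqrt_one_add_sq (x : ℝ) : |x| ≤ √(1 + x ^ 2) := by
  rw [← Real.sqrt_sq_eq_abs]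
  exact Real.sqrt_le_sqrt (by linarith)

theorem one_add_sq_pow_le_sqrt_pow_mul (k : ℕ) (x : ℝ) :
    (1 + x ^ 2) ^ k ≤ √(1 + x ^ 2) ^ (k + 1) * √(1 + x ^ 2) ^ (k - 1) := by
  have hs := Real.sq_sqrt (by positivity : (0 : ℝ) ≤ 1 + x ^ 2)
  calc (1 + x ^ 2) ^ k = √(1 + x ^ 2) ^ (2 * k) := by rw [pow_mul, hs]
    _ ≤ √(1 + x ^ 2) ^ (k + 1 + (k - 1)) :=
        pow_le_pow_right₀ (one_le_sqrt_one_add_sq x) (by omega)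
    _ = _ := pow_add _ _ _

theorem natCast_mul_abs_mul_one_add_sq_pow_le (k : ℕ) (x : ℝ) :
    k * (|x| * (1 + x ^ 2) ^ (k - 1)) ≤ k * (√(1 + x ^ 2) ^ k * √(1 + x ^ 2) ^ (k - 1)) := by
  rcases k with _ | k
  · simp
  · refine mul_le_mul_of_nonneg_left ?_ (Nat.cast_nonneg _)
    have hs := Real.sq_sqrt (by positivity : (0 : ℝ) ≤ 1 + x ^ 2)
    calc |x| * (1 + x ^ 2) ^ (k + 1 - 1) = |x| * √(1 + x ^ 2) ^ (2 * k) := by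
          rw [Nat.add_sub_cancel, pow_mul, hs]
      _ ≤ √(1 + x ^ 2) * √(1 + x ^ 2) ^ (2 * k) := by
          gcongr
          exact abs_le_sqrt_one_add_sq x
      _ = _ := by
          rw [← pow_succ', ← pow_add, Nat.add_sub_cancel]
          congr 1
          omega

theorem le_of_le_two_mul_sqrt_mul_sqrt_add {A B C t : ℝ} (hA : 0 ≤ A) (hB : 0 ≤ B)
    (h : A ≤ 2 * t * √A * √B + √C * √B) :
    A ≤ (4 * t ^ 2 + 2) * √C * √B + (4 * t ^ 2 + 2) * B := by
  have hCB : 0 ≤ √C * √B := by positivity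
  nlinarith [sq_nonneg (√A - 2 * t * √B), Real.sq_sqrt hA, Real.sq_sqrt hB,
    mul_nonneg (sq_nonneg t) hCB]

section InnerProductSpace

variable {E : Type*} [NormedAddCommGroup E] [InnerProductSpace ℝ E]

theorem norm_sqrt_one_add_sq_pow_smul_sq (m : ℕ) (x : ℝ) (v : E) :
    ‖√(1 + x ^ 2) ^ m • v‖ ^ 2 = (1 + x ^ 2) ^ m * ‖v‖ ^ 2 := by
  rw [norm_smul, mul_pow, norm_pow, Real.norm_of_nonneg (Real.sqrt_nonneg _), ← pow_mul,
    mul_comm m, pow_mul, Real.sq_sqrt (by positivity)]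

theorem abs_weight_inner_add_le (k : ℕ) (x : ℝ) (p q r : E) :
    |k * (1 + x ^ 2) ^ (k - 1) * (2 * x) * inner ℝ p r + (1 + x ^ 2) ^ k * inner ℝ q r| ≤
      2 * k * (‖√(1 + x ^ 2) ^ k • p‖ * ‖√(1 + x ^ 2) ^ (k - 1) • r‖) +
        ‖√(1 + x ^ 2) ^ (k + 1) • q‖ * ‖√(1 + x ^ 2) ^ (k - 1) • r‖ := by
  have hpr := abs_real_inner_le_norm p r
  have hqr := abs_real_inner_le_norm q r
  simp only [norm_smul, norm_pow, Real.norm_of_nonneg (Real.sqrt_nonneg _)]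
  calc _ ≤ 2 * (k * (|x| * (1 + x ^ 2) ^ (k - 1))) * |inner ℝ p r|
        + (1 + x ^ 2) ^ k * |inner ℝ q r| := by
        refine (abs_add_le _ _).trans_eq ?_
        simp only [abs_mul, abs_pow, abs_two, Nat.abs_cast,
          abs_of_nonneg (by positivity : (0 : ℝ) ≤ 1 + x ^ 2)]
        ring
    _ ≤ 2 * (k * (√(1 + x ^ 2) ^ k * √(1 + x ^ 2) ^ (k - 1))) * (‖p‖ * ‖r‖)
        + √(1 + x ^ 2) ^ (k + 1) * √(1 + x ^ 2) ^ (k - 1) * (‖q‖ * ‖r‖) := by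
        gcongr 2 * ?_ * ?_ + ?_ * ?_
        · exact natCast_mul_abs_mul_one_add_sq_pow_le k x
        · exact one_add_sq_pow_le_sqrt_pow_mul k x
    _ = _ := by ring

theorem SchwartzMap.coe_derivCLM_iterate (f : 𝓢(ℝ, E)) (n : ℕ) :
    ⇑((derivCLM ℝ E)^[n] f) = iteratedDeriv n f := by
  induction n with
  | zero => simp
  | succ n ih => rw [Function.iterate_succ_apply', iteratedDeriv_succ, ← ih]; rfl

theorem SchwartzMap.memLp_two_sqrt_one_add_sq_pow_smul (m : ℕ) (g : 𝓢(ℝ, E)) :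
    MemLp (fun x : ℝ => √(1 + x ^ 2) ^ m • g x) 2 := by
  have hw : Function.HasTemperateGrowth (fun x : ℝ => (1 + x ^ 2) ^ m) := by fun_prop
  refine (memLp_two_iff_integrable_sq_norm (by fun_prop)).2 ?_
  refine (pairing (innerSL ℝ) (smulLeftCLM E (fun x : ℝ => (1 + x ^ 2) ^ m) g) g).integrable.congr
    (.of_forall fun x => ?_)
  change inner ℝ (smulLeftCLM E (fun x : ℝ => (1 + x ^ 2) ^ m) g x) (g x) = _
  rw [smulLeftCLM_apply_apply hw, real_inner_smul_left, real_inner_self_eq_norm_sq,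
    ← norm_sqrt_one_add_sq_pow_smul_sq]

theorem SchwartzMap.integral_mul_norm_deriv_sq {w w' : ℝ → ℝ} (hw : w.HasTemperateGrowth)
    (hw' : ∀ x, HasDerivAt w (w' x) x) (u : 𝓢(ℝ, E)) :
    ∫ x, w x * ‖deriv u x‖ ^ 2 =
      -∫ x, (w' x * inner ℝ (deriv u x) (u x) + w x * inner ℝ (deriv (deriv u) x) (u x)) := by
  set g := smulLeftCLM E w (derivCLM ℝ E u)
  have hg : ⇑g = fun y => w y • deriv u y := smulLeftCLM_apply hw _
  have hg' : ∀ x, deriv g x = w' x • deriv u x + w x • deriv (deriv u) x := fun x => by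
    rw [hg]
    exact ((hw' x).smul ((derivCLM ℝ E u).hasDerivAt x)).deriv.trans (add_comm _ _)
  have h : ∫ x, inner ℝ (g x) (deriv u x) = -∫ x, inner ℝ (deriv g x) (u x) :=
    integral_bilinear_deriv_right_eq_neg_left g u (innerSL ℝ)
  simp only [hg'] at h
  simpa [hg, real_inner_smul_left, inner_add_left, real_inner_self_eq_norm_sq] using h

theorem SchwartzMap.integral_norm_weighted_deriv_sq_le (k : ℕ) (u : 𝓢(ℝ, E)) :
    ∫ x, ‖√(1 + x ^ 2) ^ k • deriv u x‖ ^ 2 ≤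
      2 * k * √(∫ x, ‖√(1 + x ^ 2) ^ k • deriv u x‖ ^ 2) *
          √(∫ x, ‖√(1 + x ^ 2) ^ (k - 1) • u x‖ ^ 2) +
        √(∫ x, ‖√(1 + x ^ 2) ^ (k + 1) • deriv (deriv u) x‖ ^ 2) *
          √(∫ x, ‖√(1 + x ^ 2) ^ (k - 1) • u x‖ ^ 2) := by
  set a := fun x : ℝ => √(1 + x ^ 2) ^ k • deriv u x
  set b := fun x : ℝ => √(1 + x ^ 2) ^ (k - 1) • u x
  set c := fun x : ℝ => √(1 + x ^ 2) ^ (k + 1) • deriv (deriv u) x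
  have ha : MemLp a 2 := memLp_two_sqrt_one_add_sq_pow_smul k (derivCLM ℝ E u)
  have hb : MemLp b 2 := memLp_two_sqrt_one_add_sq_pow_smul (k - 1) u
  have hc : MemLp c 2 :=
    memLp_two_sqrt_one_add_sq_pow_smul (k + 1) (derivCLM ℝ E (derivCLM ℝ E u))
  have hw : ∀ x : ℝ, HasDerivAt (fun y => (1 + y ^ 2) ^ k)
      (k * (1 + x ^ 2) ^ (k - 1) * (2 * x)) x := fun x => by
    simpa using ((hasDerivAt_pow 2 x).const_add 1).fun_pow k
  have hab : Integrable (fun x => ‖a x‖ * ‖b x‖) := ha.norm.integrable_mul hb.norm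
  have hcb : Integrable (fun x => ‖c x‖ * ‖b x‖) := hc.norm.integrable_mul hb.norm
  calc ∫ x, ‖a x‖ ^ 2 = ∫ x, (1 + x ^ 2) ^ k * ‖deriv u x‖ ^ 2 := by
        simp_rw [a, norm_sqrt_one_add_sq_pow_smul_sq]
    _ = -∫ x, (k * (1 + x ^ 2) ^ (k - 1) * (2 * x) * inner ℝ (deriv u x) (u x)
          + (1 + x ^ 2) ^ k * inner ℝ (deriv (deriv u) x) (u x)) :=
        integral_mul_norm_deriv_sq (by fun_prop) hw u
    _ ≤ ∫ x, (2 * k * (‖a x‖ * ‖b x‖) + ‖c x‖ * ‖b x‖) := by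
        refine (neg_le_abs _).trans (abs_integral_le_integral_abs.trans ?_)
        refine integral_mono_of_nonneg (.of_forall fun _ => abs_nonneg _) ?_
          (.of_forall fun x => abs_weight_inner_add_le k x _ _ _)
        exact (hab.const_mul _).add hcb
    _ = 2 * k * (∫ x, ‖a x‖ * ‖b x‖) + ∫ x, ‖c x‖ * ‖b x‖ := by
        rw [integral_add (hab.const_mul _) hcb, integral_const_mul]
    _ ≤ _ := by
        rw [mul_assoc _ √_]
        gcongr
        · exact integral_norm_mul_norm_le_sqrt_mul_sqrt ha hb
        · exact integral_norm_mul_norm_le_sqrt_mul_sqrt hc hb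

end InnerProductSpace

theorem weighted_interpolation_by_parts_third_general (j k : ℕ) (hj : 1 ≤ j) :
    ∃ c : ℝ, 0 < c ∧ ∀ f : SchwartzMap ℝ ℂ,
      (∫ x : ℝ, ‖(Real.sqrt (1 + x ^ 2) ^ k : ℝ) • iteratedDeriv j (⇑f) x‖ ^ 2) ≤
        c * Real.sqrt (∫ x : ℝ,
            ‖(Real.sqrt (1 + x ^ 2) ^ (k + 1) : ℝ) • iteratedDeriv (j + 1) (⇑f) x‖ ^ 2) *
          Real.sqrt (∫ x : ℝ,
            ‖(Real.sqrt (1 + x ^ 2) ^ (k - 1) : ℝ) • iteratedDeriv (j - 1) (⇑f) x‖ ^ 2) +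
        c * ∫ x : ℝ,
          ‖(Real.sqrt (1 + x ^ 2) ^ (k - 1) : ℝ) • iteratedDeriv (j - 1) (⇑f) x‖ ^ 2 := by
  refine ⟨4 * k ^ 2 + 2, by positivity, fun f => ?_⟩
  obtain ⟨i, rfl⟩ := Nat.exists_eq_add_of_le' hj
  set u := (derivCLM ℝ ℂ)^[i] f
  have hu : iteratedDeriv i f = u := (coe_derivCLM_iterate f i).symm
  have hu' : iteratedDeriv (i + 1) f = deriv u := by rw [iteratedDeriv_succ, hu]
  have hu'' : iteratedDeriv (i + 1 + 1) f = deriv (deriv u) := by rw [iteratedDeriv_succ, hu']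
  rw [Nat.add_sub_cancel, hu, hu', hu'']
  exact le_of_le_two_mul_sqrt_mul_sqrt_add (by positivity) (by positivity)
    (integral_norm_weighted_deriv_sq_le k u)

/-- **Lemma 2.5, third inequality.** For integers `j, k ≥ 1` there is `c = c(k,j) > 0`
such that for every Schwartz `f`,
`‖⟨x⟩^k ∂_x^j f‖₂² ≤ c ‖⟨x⟩^{k+1} ∂_x^{j+1} f‖₂ ‖⟨x⟩^{k-1} ∂_x^{j-1} f‖₂ + c ‖⟨x⟩^{k-1} ∂_x^{j-1} f‖₂²`. -/
theorem weighted_interpolation_by_parts_third (j k : ℕ) (hj : 1 ≤ j) (hk : 1 ≤ k) :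
    ∃ c : ℝ, 0 < c ∧ ∀ f : SchwartzMap ℝ ℂ,
      (∫ x : ℝ, ‖(Real.sqrt (1 + x ^ 2) ^ k : ℝ) • iteratedDeriv j (⇑f) x‖ ^ 2) ≤
        c * Real.sqrt (∫ x : ℝ,
            ‖(Real.sqrt (1 + x ^ 2) ^ (k + 1) : ℝ) • iteratedDeriv (j + 1) (⇑f) x‖ ^ 2) *
          Real.sqrt (∫ x : ℝ,
            ‖(Real.sqrt (1 + x ^ 2) ^ (k - 1) : ℝ) • iteratedDeriv (j - 1) (⇑f) x‖ ^ 2) +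
        c * ∫ x : ℝ,
          ‖(Real.sqrt (1 + x ^ 2) ^ (k - 1) : ℝ) • iteratedDeriv (j - 1) (⇑f) x‖ ^ 2 :=
  weighted_interpolation_by_parts_third_general j k hj
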